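/- Suppose M is a totally k-bounded L-structure over a finite relational language L of maximum arity r ≥ 2, and M contains an infinite connected component A. Then for every integer t ≥ 1 there exists t' with t ≤ t' ≤ tr and a connected subset A' ⊆ A with |A'| = t'. -/

import Mathlib

open FirstOrder FirstOrder.Language

/-- One step of a path inside `A`: `x` and `y` occur in a common relation tuple of the
structure all of whose entries lie in `A`. -/
def StepIn (L : FirstOrder.Language) {M : Type*} [L.Structure M] (A : Set M)
    (x y : M) : Prop :=
  x ∈ A ∧ y ∈ A ∧ ∃ (n : ℕ) (R : L.Relations n) (v : Fin n → M),
    Structure.RelMap R v ∧ (∀ i, v i ∈ A) ∧ x ∈ Set.range v ∧ y ∈ Set.range v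

/-- A set is connected if any two of its elements are joined by a path of overlapping
relation tuples inside the set. -/
def IsConnectedSet (L : FirstOrder.Language) {M : Type*} [L.Structure M]
    (A : Set M) : Prop :=
  ∀ a ∈ A, ∀ b ∈ A, Relation.ReflTransGen (StepIn L A) a b

/-- A component is a maximal connected set. -/
def IsComponent (L : FirstOrder.Language) {M : Type*} [L.Structure M]
    (A : Set M) : Prop :=
  IsConnectedSet L A ∧ ∀ B : Set M, A ⊆ B → IsConnectedSet L B → B = A

/-- Totally `k`-bounded: for every relation `R` of arity `s` and every proper nonempty
set `I` of coordinates, any assignment to the `I`-coordinates has fewer than `k`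
completions to a tuple satisfying `R`. -/
def TotallyBddStruct (L : FirstOrder.Language) (M : Type*) [L.Structure M]
    (k : ℕ) : Prop :=
  ∀ (s : ℕ) (R : L.Relations s) (I : Finset (Fin s)), I.Nonempty → I ≠ Finset.univ →
    ∀ v : Fin s → M,
      {w : Fin s → M | Structure.RelMap R w ∧ ∀ i ∈ I, w i = v i}.Finite ∧
      {w : Fin s → M | Structure.RelMap R w ∧ ∀ i ∈ I, w i = v i}.ncard < k

/-!
A finite connected subset `A'` of an infinite connected set `A` can always be enlarged: a path
inside `A` from a point of `A'` to a point outside `A'` must at some step use a relation tuple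
meeting both `A'` and its complement, and adding the entries of that tuple (at most `r` of them)
keeps the set connected. Starting from a singleton and enlarging `t - 1` times produces a
connected set whose size lies between `t` and `t * r`.
-/

open Set

section Connectivity

variable {L : FirstOrder.Language} {M : Type*} [L.Structure M]

theorem StepIn.mono {A B : Set M} (h : A ⊆ B) {x y : M} (hs : StepIn L A x y) :
    StepIn L B x y := by
  obtain ⟨hx, hy, n, R, v, hR, hv, hxv, hyv⟩ := hs
  exact ⟨h hx, h hy, n, R, v, hR, fun i => h (hv i), hxv, hyv⟩

theorem StepIn.symm {A : Set M} {x y : M} (hs : StepIn L A x y) : StepIn L A y x := by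
  obtain ⟨hx, hy, n, R, v, hR, hv, hxv, hyv⟩ := hs
  exact ⟨hy, hx, n, R, v, hR, hv, hyv, hxv⟩

instance (A : Set M) : Std.Symm (StepIn L A) := ⟨fun _ _ => StepIn.symm⟩

theorem isConnectedSet_singleton (a : M) : IsConnectedSet L {a} := by
  rintro x rfl y rfl
  exact .refl

theorem exists_stepIn_of_reflTransGen {A S : Set M} {a b : M}
    (h : Relation.ReflTransGen (StepIn L A) a b) (ha : a ∈ S) (hb : b ∉ S) :
    ∃ x ∈ S, ∃ y ∉ S, StepIn L A x y := by
  induction h using Relation.ReflTransGen.head_induction_on with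
  | refl => exact absurd ha hb
  | @head p q hpq _ ih =>
    by_cases hq : q ∈ S
    · exact ih hq
    · exact ⟨p, ha, q, hq, hpq⟩

theorem IsConnectedSet.union_range {A : Set M} (hA : IsConnectedSet L A) {n : ℕ}
    {R : L.Relations n} {v : Fin n → M} (hR : Structure.RelMap R v) {x : M} (hxA : x ∈ A)
    (hxv : x ∈ range v) : IsConnectedSet L (A ∪ range v) := by
  have to_x : ∀ p ∈ A ∪ range v, Relation.ReflTransGen (StepIn L (A ∪ range v)) p x := by
    rintro p (hp | hp)
    · exact Relation.ReflTransGen.mono (fun _ _ => StepIn.mono subset_union_left) _ _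
        (hA p hp x hxA)
    · exact .single ⟨.inr hp, .inl hxA, n, R, v, hR, fun i => .inr ⟨i, rfl⟩, hp, hxv⟩
  intro p hp q hq
  exact (to_x p hp).trans <| Std.Symm.symm _ _ (to_x q hq)

theorem ncard_range_le {n : ℕ} (v : Fin n → M) : (range v).ncard ≤ n := by
  calc (range v).ncard = (v '' univ).ncard := by rw [image_univ]
    _ ≤ (univ : Set (Fin n)).ncard := ncard_image_le
    _ = n := by simp

theorem IsConnectedSet.exists_ssubset_ncard_le {A B : Set M} (hA : IsConnectedSet L A)
    {r : ℕ} (harity : ∀ n, r < n → IsEmpty (L.Relations n))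
    (hBA : B ⊆ A) (hB : IsConnectedSet L B) (hBfin : B.Finite) (hBne : B.Nonempty)
    (hAB : (A \ B).Nonempty) :
    ∃ C ⊆ A, B ⊂ C ∧ IsConnectedSet L C ∧ C.Finite ∧ C.ncard ≤ B.ncard + r := by
  obtain ⟨a, ha⟩ := hBne
  obtain ⟨b, hbA, hbB⟩ := hAB
  obtain ⟨x, hxB, y, hyB, -, -, n, R, v, hR, hvA, hxv, hyv⟩ :=
    exists_stepIn_of_reflTransGen (hA a (hBA ha) b hbA) ha hbB
  have hn : n ≤ r := not_lt.mp fun h => (harity n h).false R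
  refine ⟨B ∪ range v, union_subset hBA (range_subset_iff.mpr hvA),
    ssubset_of_subset_not_subset subset_union_left fun h => hyB (h (.inr hyv)),
    hB.union_range hR hxB hxv, hBfin.union (finite_range v), ?_⟩
  calc (B ∪ range v).ncard ≤ B.ncard + (range v).ncard := ncard_union_le _ _
    _ ≤ B.ncard + r := by have := ncard_range_le v; omega

theorem IsConnectedSet.exists_subset_ncard_mem_Icc {A : Set M} (hA : IsConnectedSet L A)
    (hinf : A.Infinite) {r : ℕ} (hr : 1 ≤ r) (harity : ∀ n, r < n → IsEmpty (L.Relations n))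
    {t : ℕ} (ht : 1 ≤ t) :
    ∃ B ⊆ A, IsConnectedSet L B ∧ B.Finite ∧ t ≤ B.ncard ∧ B.ncard ≤ t * r := by
  induction t, ht using Nat.le_induction with
  | base =>
    obtain ⟨a, ha⟩ := hinf.nonempty
    exact ⟨{a}, singleton_subset_iff.mpr ha, isConnectedSet_singleton a, finite_singleton a,
      by simp, by simpa using hr⟩
  | succ t ht ih =>
    obtain ⟨B, hBA, hB, hBfin, htB, hBt⟩ := ih
    by_cases hlt : t < B.ncard
    · exact ⟨B, hBA, hB, hBfin, hlt, hBt.trans (Nat.mul_le_mul_right r t.le_succ)⟩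
    have hBne : B.Nonempty := nonempty_of_ncard_ne_zero (by omega)
    obtain ⟨C, hCA, hBC, hC, hCfin, hCB⟩ :=
      hA.exists_ssubset_ncard_le harity hBA hB hBfin hBne (hinf.sdiff hBfin).nonempty
    have hcard := ncard_lt_ncard hBC hCfin
    exact ⟨C, hCA, hC, hCfin, by omega, by rw [Nat.succ_mul]; omega⟩

end Connectivity

theorem stmt13_general (L : FirstOrder.Language) (r : ℕ) (hr : 2 ≤ r)
    (harity : ∀ n, r < n → IsEmpty (L.Relations n))
    (M : Type*) [L.Structure M]
    (A : Set M) (hA : IsComponent L A) (hinf : A.Infinite) :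
    ∀ t : ℕ, 1 ≤ t → ∃ t', t ≤ t' ∧ t' ≤ t * r ∧
      ∃ A' ⊆ A, IsConnectedSet L A' ∧ A'.Finite ∧ A'.ncard = t' := by
  intro t ht
  obtain ⟨B, hBA, hB, hBfin, htB, hBt⟩ :=
    hA.1.exists_subset_ncard_mem_Icc hinf (by omega) harity ht
  exact ⟨B.ncard, htB, hBt, B, hBA, hB, hBfin, rfl⟩

/-- if a totally `k`-bounded structure over a finite relational language of
maximum arity `r ≥ 2` has an infinite connected component `A`, then for every `t ≥ 1`
there is `t ≤ t' ≤ tr` and a connected subset `A' ⊆ A` of size `t'`. -/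
theorem stmt13 (L : FirstOrder.Language) [L.IsRelational]
    [∀ n, Finite (L.Relations n)] (r k : ℕ) (hr : 2 ≤ r)
    (harity : ∀ n, r < n → IsEmpty (L.Relations n))
    (M : Type*) [L.Structure M] (hbdd : TotallyBddStruct L M k)
    (A : Set M) (hA : IsComponent L A) (hinf : A.Infinite) :
    ∀ t : ℕ, 1 ≤ t → ∃ t', t ≤ t' ∧ t' ≤ t * r ∧
      ∃ A' ⊆ A, IsConnectedSet L A' ∧ A'.Finite ∧ A'.ncard = t' :=
  stmt13_general L r hr harity M A hA hinf
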